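/- Let X be a metric space with a bounded metric d, let p ≥ 1, and let x₁, x₂, … be a sequence of independent identically distributed X-valued random variables with common Borel distribution μ (with separable support). Let μ_k := (1/k) Σ_{i=1}^k δ_{x_i} denote the empirical measure of the first k samples. Then almost surely diam_p(X, d, μ_k) → diam_p(X, d, μ) as k → ∞. -/

import Mathlib

open MeasureTheory Filter Topology ProbabilityTheory Finset BoundedContinuousFunction
open scoped ENNReal

/-!
Write `K a b = d(a, b) ^ p`. As `K` is bounded and uniformly continuous, `b ↦ K(·, b)` is a
continuous map `Ψ : X → (X →ᵇ ℝ)`, whose range on the separable support of `μ` is separable. The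
strong law of large numbers in the Banach space `X →ᵇ ℝ` gives `G_k := ∫ Ψ dμ_k → F := ∫ Ψ dμ`
uniformly, almost surely, and the scalar strong law gives `∫ F dμ_k → ∫ F dμ`. Since
`∫∫ K dμ_k dμ_k = ∫ G_k dμ_k` and `|∫ (G_k - F) dμ_k| ≤ ‖G_k - F‖`, the double integrals converge;
taking `p`-th roots is continuous.
-/

theorem ContinuousOn.comp_uniformContinuous_of_isCompact {α β γ : Type*}
    [UniformSpace α] [UniformSpace β] [UniformSpace γ] {g : β → γ} {f : α → β} {s : Set β}
    (hs : IsCompact s) (hg : ContinuousOn g s) (hf : UniformContinuous f) (hfs : ∀ a, f a ∈ s) :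
    UniformContinuous (g ∘ f) :=
  (uniformContinuousOn_iff_restrict.1 (hs.uniformContinuousOn_of_continuous hg)).comp
    (hf.subtype_mk hfs)

theorem BoundedContinuousFunction.continuous_of_uniformContinuous₂ {α β γ : Type*}
    [UniformSpace α] [UniformSpace β] [PseudoMetricSpace γ] {Φ : α → β →ᵇ γ}
    (hΦ : UniformContinuous₂ fun a b => Φ a b) : Continuous Φ :=
  continuous_iff_continuousAt.2 fun _ =>
    BoundedContinuousFunction.tendsto_iff_tendstoUniformly.2 hΦ.tendstoUniformly

section EmpiricalMeasure

variable {X : Type*} [MeasurableSpace X]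

noncomputable def empiricalMeasure (y : ℕ → X) (k : ℕ) : Measure X :=
  (k : ℝ≥0∞)⁻¹ • ∑ i ∈ range k, Measure.dirac (y i)

variable [MeasurableSingletonClass X] {E : Type*} [NormedAddCommGroup E] [NormedSpace ℝ E]
  [CompleteSpace E]

theorem integral_empiricalMeasure (y : ℕ → X) (k : ℕ) (f : X → E) :
    ∫ a, f a ∂empiricalMeasure y k = (k : ℝ)⁻¹ • ∑ i ∈ range k, f (y i) := by
  rw [empiricalMeasure, integral_smul_measure,
    integral_finsetSum_measure fun i _ => integrable_dirac enorm_lt_top]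
  simp

theorem norm_integral_empiricalMeasure_le [TopologicalSpace X] (y : ℕ → X) (k : ℕ)
    (g : X →ᵇ E) : ‖∫ a, g a ∂empiricalMeasure y k‖ ≤ ‖g‖ := by
  rw [integral_empiricalMeasure, norm_smul, norm_inv, Real.norm_natCast]
  rcases k.eq_zero_or_pos with rfl | hk
  · simp
  calc (k : ℝ)⁻¹ * ‖∑ i ∈ range k, g (y i)‖
      ≤ (k : ℝ)⁻¹ * ∑ _i ∈ range k, ‖g‖ := by
        gcongr
        exact (norm_sum_le _ _).trans (sum_le_sum fun i _ => g.norm_coe_le_norm _)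
    _ = ‖g‖ := by simp [field]

theorem tendsto_integral_empiricalMeasure_of_tendsto [TopologicalSpace X] {y : ℕ → X}
    {G : ℕ → X →ᵇ E} {F : X →ᵇ E} {L : E} (hG : Tendsto G atTop (𝓝 F))
    (hF : Tendsto (fun k => ∫ a, F a ∂empiricalMeasure y k) atTop (𝓝 L)) :
    Tendsto (fun k => ∫ a, G k a ∂empiricalMeasure y k) atTop (𝓝 L) := by
  have hdiff : ∀ k, ∫ a, G k a ∂empiricalMeasure y k - ∫ a, F a ∂empiricalMeasure y k
      = ∫ a, (G k - F) a ∂empiricalMeasure y k := fun k => by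
    simp only [integral_empiricalMeasure, BoundedContinuousFunction.coe_sub, Pi.sub_apply,
      sum_sub_distrib, smul_sub]
  have hsmall : Tendsto (fun k => ∫ a, (G k - F) a ∂empiricalMeasure y k) atTop (𝓝 0) :=
    squeeze_zero_norm (fun k => norm_integral_empiricalMeasure_le y k _)
      (tendsto_iff_norm_sub_tendsto_zero.1 hG)
  simpa only [← hdiff, sub_add_cancel, zero_add] using hsmall.add hF

end EmpiricalMeasure

section StrongLaw

variable {X Ω : Type*} [MeasurableSpace X] [MeasurableSingletonClass X] [MeasurableSpace Ω]
  {P : Measure Ω} {μ : Measure X} {x : ℕ → Ω → X}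

theorem ae_tendsto_integral_empiricalMeasure {E : Type*} [NormedAddCommGroup E]
    [NormedSpace ℝ E] [CompleteSpace E] [MeasurableSpace E] [BorelSpace E]
    (hmeas : ∀ i, Measurable (x i)) (hindep : iIndepFun x P) (hident : ∀ i, P.map (x i) = μ)
    {g : X → E} (hg : Measurable g) (hgi : Integrable g μ) :
    ∀ᵐ ω ∂P, Tendsto (fun k => ∫ a, g a ∂empiricalMeasure (fun i => x i ω) k) atTop
      (𝓝 (∫ a, g a ∂μ)) := by
  have hid : ∀ i, IdentDistrib (x i) (x 0) P P := fun i =>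
    ⟨(hmeas i).aemeasurable, (hmeas 0).aemeasurable, by rw [hident, hident]⟩
  rw [← hident 0] at hgi ⊢
  have hmean : ∫ ω, g (x 0 ω) ∂P = ∫ a, g a ∂P.map (x 0) :=
    (integral_map (hmeas 0).aemeasurable hgi.aestronglyMeasurable).symm
  filter_upwards [strong_law_ae (fun i => g ∘ x i) (hgi.comp_measurable (hmeas 0))
    (fun i j hij => (hindep.indepFun hij).comp hg hg) (fun i => (hid i).comp hg)] with ω hω
  simpa only [integral_empiricalMeasure, Function.comp_apply, hmean] using hω

theorem ae_tendsto_integral_integral_empiricalMeasure [IsProbabilityMeasure P]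
    [UniformSpace X] [OpensMeasurableSpace X] {K : X → X → ℝ}
    (hK : UniformContinuous (Function.uncurry K)) {C : ℝ} (hKC : ∀ a b, |K a b| ≤ C)
    (hsep : ∃ s : Set X, TopologicalSpace.IsSeparable s ∧ μ sᶜ = 0)
    (hmeas : ∀ i, Measurable (x i)) (hindep : iIndepFun x P) (hident : ∀ i, P.map (x i) = μ) :
    ∀ᵐ ω ∂P, Tendsto
      (fun k => ∫ a, ∫ b, K a b ∂empiricalMeasure (fun i => x i ω) k
        ∂empiricalMeasure (fun i => x i ω) k)
      atTop (𝓝 (∫ a, ∫ b, K a b ∂μ ∂μ)) := by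
  have : IsProbabilityMeasure μ :=
    hident 0 ▸ Measure.isProbabilityMeasure_map (hmeas 0).aemeasurable
  let : MeasurableSpace (X →ᵇ ℝ) := borel _
  have : BorelSpace (X →ᵇ ℝ) := ⟨rfl⟩
  let Ψ : X → X →ᵇ ℝ := fun b => ofNormedAddCommGroup (K · b)
    (hK.continuous.comp (continuous_id.prodMk continuous_const)) C (hKC · b)
  have hΨ : Continuous Ψ := continuous_of_uniformContinuous₂ (hK.comp uniformContinuous_swap)
  have hΨint : Integrable Ψ μ := by
    obtain ⟨s, hs, hμs⟩ := hsep
    refine .of_bound (aestronglyMeasurable_iff_aemeasurable_separable.2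
      ⟨hΨ.measurable.aemeasurable, Ψ '' s, hs.image hΨ, ?_⟩) C (ae_of_all _ fun b =>
        norm_ofNormedAddCommGroup_le _ ((abs_nonneg _).trans (hKC b b)) _)
    exact Filter.mem_of_superset (mem_ae_iff.2 hμs) fun b hb => Set.mem_image_of_mem Ψ hb
  set F := ∫ b, Ψ b ∂μ
  have hF : ∀ a, F a = ∫ b, K a b ∂μ := fun a =>
    ((evalCLM ℝ a).integral_comp_comm hΨint).symm
  have hinner : ∀ (y : ℕ → X) k a, ∫ b, K a b ∂empiricalMeasure y k
      = (∫ b, Ψ b ∂empiricalMeasure y k) a := fun y k a => by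
    simp only [integral_empiricalMeasure, BoundedContinuousFunction.coe_smul,
      BoundedContinuousFunction.coe_sum, Finset.sum_apply]
    rfl
  filter_upwards [ae_tendsto_integral_empiricalMeasure hmeas hindep hident hΨ.measurable hΨint,
    ae_tendsto_integral_empiricalMeasure hmeas hindep hident F.continuous.measurable
      (F.integrable μ)] with ω hG hF'
  simp_rw [hinner, ← hF]
  exact tendsto_integral_empiricalMeasure_of_tendsto hG hF'

end StrongLaw

theorem stmt_9_general {X : Type*} [MetricSpace X] [MeasurableSpace X] [BorelSpace X]
    (hbdd : ∃ C : ℝ, ∀ a b : X, dist a b ≤ C) (p : ℝ) (hp : 1 ≤ p)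
    {Ω : Type*} [MeasurableSpace Ω] (P : Measure Ω) [IsProbabilityMeasure P]
    (x : ℕ → Ω → X) (hmeas : ∀ i, Measurable (x i))
    (μ : Measure X)
    (hsep : ∃ s : Set X, TopologicalSpace.IsSeparable s ∧ μ sᶜ = 0)
    (hindep : ProbabilityTheory.iIndepFun x P)
    (hident : ∀ i, Measure.map (x i) P = μ) :
    ∀ᵐ ω ∂P, Tendsto
      (fun k : ℕ =>
        (∫ a, ∫ b, dist a b ^ p
            ∂((k : ℝ≥0∞)⁻¹ • ∑ i ∈ Finset.range k, Measure.dirac (x i ω))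
            ∂((k : ℝ≥0∞)⁻¹ • ∑ i ∈ Finset.range k, Measure.dirac (x i ω))) ^ (1 / p))
      atTop (nhds ((∫ a, ∫ b, dist a b ^ p ∂μ ∂μ) ^ (1 / p))) := by
  obtain ⟨C, hC⟩ := hbdd
  have hp₀ : 0 ≤ p := zero_le_one.trans hp
  have hK : UniformContinuous (Function.uncurry fun a b : X => dist a b ^ p) :=
    (Real.continuous_rpow_const hp₀).continuousOn.comp_uniformContinuous_of_isCompact
      isCompact_Icc uniformContinuous_dist fun q => ⟨dist_nonneg, hC q.1 q.2⟩
  have hKC : ∀ a b : X, |dist a b ^ p| ≤ C ^ p := fun a b => by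
    rw [abs_of_nonneg (by positivity)]
    exact Real.rpow_le_rpow dist_nonneg (hC a b) hp₀
  filter_upwards [ae_tendsto_integral_integral_empiricalMeasure hK hKC hsep hmeas hindep hident]
    with ω hω
  exact hω.rpow_const (Or.inr (by positivity))

/-- For a bounded metric space `(X, d)`, `p ≥ 1`, and i.i.d. `X`-valued
random variables `x₁, x₂, …` with common Borel distribution `μ` (with separable support),
the `p`-diameters of the empirical measures `μ_k = (1/k) ∑_{i<k} δ_{x_i}` converge almost
surely to `diam_p(X, d, μ)`. -/
theorem stmt_9 {X : Type*} [MetricSpace X] [MeasurableSpace X] [BorelSpace X]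
    (hbdd : ∃ C : ℝ, ∀ a b : X, dist a b ≤ C) (p : ℝ) (hp : 1 ≤ p)
    {Ω : Type*} [MeasurableSpace Ω] (P : Measure Ω) [IsProbabilityMeasure P]
    (x : ℕ → Ω → X) (hmeas : ∀ i, Measurable (x i))
    (μ : Measure X) [IsProbabilityMeasure μ]
    (hsep : ∃ s : Set X, TopologicalSpace.IsSeparable s ∧ μ sᶜ = 0)
    (hindep : ProbabilityTheory.iIndepFun x P)
    (hident : ∀ i, Measure.map (x i) P = μ) :
    ∀ᵐ ω ∂P, Tendsto
      (fun k : ℕ =>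
        (∫ a, ∫ b, dist a b ^ p
            ∂((k : ℝ≥0∞)⁻¹ • ∑ i ∈ Finset.range k, Measure.dirac (x i ω))
            ∂((k : ℝ≥0∞)⁻¹ • ∑ i ∈ Finset.range k, Measure.dirac (x i ω))) ^ (1 / p))
      atTop (nhds ((∫ a, ∫ b, dist a b ^ p ∂μ ∂μ) ^ (1 / p))) :=
  stmt_9_general hbdd p hp P x hmeas μ hsep hindep hident
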